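/- arXiv:2310.09431 — 6 statements merged into one kernel-verified Lean document; each statement's English description precedes it below -/
import Mathlib

section
/- If A : X → Y is a bounded linear operator between Hilbert spaces whose range A(X) is not closed, then every right inverse R : A(X) → X of A (i.e., any map with A(R(y)) = y for all y ∈ A(X)) is discontinuous. -/
/-- If a bounded linear operator `A` between Hilbert spaces has non-closed range,
then every right inverse `R` of `A` (defined on the range `A(X)`) is discontinuous. -/
theorem stmt_0
    {X Y : Type*} [NormedAddCommGroup X] [InnerProductSpace ℝ X] [CompleteSpace X]
    [NormedAddCommGroup Y] [InnerProductSpace ℝ Y] [CompleteSpace Y]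
    (A : X →L[ℝ] Y) (hA : ¬ IsClosed (Set.range A))
    (R : Y → X) (hR : ∀ y ∈ Set.range A, A (R y) = y) :
    ¬ ContinuousOn R (Set.range A) := by
  intro hcont
  apply hA
  -- `0` is in the range and `A (R 0) = 0`.
  have h0 : (0 : Y) ∈ Set.range A := ⟨0, map_zero A⟩
  have hR0 : A (R 0) = 0 := hR 0 h0
  -- continuity within the range at `0` gives a `δ`.
  have hc0 := hcont 0 h0 (Metric.isOpen_ball.mem_nhds (by simp : R 0 ∈ Metric.ball (R 0) 1))
  rw [Filter.mem_map, mem_nhdsWithin] at hc0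
  obtain ⟨U, hU, hU0, hUsub⟩ := hc0
  obtain ⟨δ, hδ, hball⟩ := Metric.isOpen_iff.1 hU 0 hU0
  -- the key estimate: every `y` in the range has a preimage of norm `≤ (2/δ) * ‖y‖`.
  have key : ∀ y ∈ Set.range A, ∃ x, A x = y ∧ ‖x‖ ≤ (2/δ) * ‖y‖ := by
    intro y hy
    rcases eq_or_ne y 0 with rfl | hy0
    · exact ⟨0, map_zero A, by simp⟩
    · have hny : (0:ℝ) < ‖y‖ := norm_pos_iff.2 hy0
      set t : ℝ := δ / (2 * ‖y‖) with ht
      have htpos : 0 < t := div_pos hδ (by positivity)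
      have hty : ‖t • y‖ < δ := by
        rw [norm_smul, Real.norm_eq_abs, abs_of_pos htpos, ht]
        rw [div_mul_eq_mul_div, div_lt_iff₀ (by positivity)]
        nlinarith
      have htymem : t • y ∈ Set.range A := by
        rcases hy with ⟨x, rfl⟩
        exact ⟨t • x, A.map_smul t x⟩
      have hmemU : t • y ∈ U := hball (by simpa [Metric.mem_ball, dist_zero_right] using hty)
      have hRty : R (t • y) ∈ Metric.ball (R 0) 1 := hUsub ⟨hmemU, htymem⟩
      refine ⟨t⁻¹ • (R (t • y) - R 0), ?_, ?_⟩
      · rw [map_smul, map_sub, hR _ htymem, hR0, sub_zero, smul_smul,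
          inv_mul_cancel₀ htpos.ne', one_smul]
      · rw [norm_smul, Real.norm_eq_abs, abs_of_pos (inv_pos.2 htpos)]
        have h1 : ‖R (t • y) - R 0‖ < 1 := by
          simpa [Metric.mem_ball, dist_eq_norm] using hRty
        have hinv : t⁻¹ = 2 * ‖y‖ / δ := by
          rw [ht, inv_div]
        calc t⁻¹ * ‖R (t • y) - R 0‖ ≤ t⁻¹ * 1 := by
              apply mul_le_mul_of_nonneg_left h1.le (inv_pos.2 htpos).le
          _ = 2 * ‖y‖ / δ := by rw [mul_one, hinv]
          _ = (2/δ) * ‖y‖ := by ring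
  -- package `A` as a `NormedAddGroupHom` and use controlled closure.
  set f : NormedAddGroupHom X Y :=
    AddMonoidHom.mkNormedAddGroupHom (A : X →+ Y)
      ‖A‖ (fun v => A.le_opNorm v) with hf
  set K : AddSubgroup Y := AddMonoidHom.range (A : X →+ Y) with hK
  have hKset : (K : Set Y) = Set.range A := rfl
  have hsurj : f.SurjectiveOnWith K (2/δ) := by
    intro h hh
    obtain ⟨x, hx1, hx2⟩ := key h (by rwa [← hKset])
    exact ⟨x, hx1, hx2⟩
  have hclos := controlled_closure_of_complete (f := f) (K := K)
    (by positivity : (0:ℝ) < 2/δ) one_pos hsurj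
  have : closure (Set.range A) ⊆ Set.range A := by
    intro z hz
    have hz' : z ∈ K.topologicalClosure := by
      exact hz
    obtain ⟨g, hg, -⟩ := hclos z hz'
    exact ⟨g, hg⟩
  exact isClosed_of_closure_subset this
end

section
/- Let R : A(X) → X be a right inverse of A and let (R_k)_{k∈ℕ} be continuous maps R_k : Y → X converging pointwise to R on A(X). Then for every y ∈ A(X) there exists a parameter choice κ : (0,∞) → ℕ with κ(δ) → ∞ as δ → 0 such that sup{ ‖R(y) − R_{κ(δ)}(y^δ)‖ : y^δ ∈ Y, ‖y^δ − y‖ ≤ δ } → 0 as δ → 0. -/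
open Filter Topology

/-- Pointwise approximations of a right inverse by continuous maps form a regularization
method: for every `y ∈ A(X)` there is a parameter choice `κ` with `κ(δ) → ∞` such that
`sup {‖R y − R_{κ(δ)} y^δ‖ : ‖y^δ − y‖ ≤ δ} → 0` as `δ → 0`. -/
theorem stmt_1
    {X Y : Type*} [NormedAddCommGroup X] [InnerProductSpace ℝ X] [CompleteSpace X]
    [NormedAddCommGroup Y] [InnerProductSpace ℝ Y] [CompleteSpace Y]
    (A : X →L[ℝ] Y)
    (R : Y → X) (hR : ∀ y ∈ Set.range A, A (R y) = y)
    (Rk : ℕ → Y → X) (hRkcont : ∀ k, Continuous (Rk k))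
    (hconv : ∀ y ∈ Set.range A, Tendsto (fun k => Rk k y) atTop (𝓝 (R y))) :
    ∀ y ∈ Set.range A, ∃ κ : ℝ → ℕ,
      Tendsto κ (𝓝[>] (0 : ℝ)) atTop ∧
      ∀ ε > (0 : ℝ), ∃ δ₀ > (0 : ℝ), ∀ δ : ℝ, 0 < δ → δ ≤ δ₀ →
        ∀ yδ : Y, ‖yδ - y‖ ≤ δ → ‖R y - Rk (κ δ) yδ‖ ≤ ε := by
  intro y hy
  have hεpos : ∀ n : ℕ, (0:ℝ) < 1/(2*(n+1)) := by intro n; positivity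
  -- choose indices where Rk k y is close to R y
  have hg : ∀ n : ℕ, ∃ K : ℕ, ∀ k ≥ K, ‖R y - Rk k y‖ ≤ 1/(2*(n+1)) := by
    intro n
    obtain ⟨K, hK⟩ := Metric.tendsto_atTop.mp (hconv y hy) (1/(2*(n+1))) (hεpos n)
    exact ⟨K, fun k hk => by
      have := hK k hk
      rw [dist_eq_norm] at this
      rw [← norm_neg, neg_sub]
      exact this.le⟩
  choose g hgspec using hg
  set m : ℕ → ℕ := fun n => max n (g n) with hm
  have hmn : ∀ n, n ≤ m n := fun n => le_max_left _ _
  have hmclose : ∀ n, ‖R y - Rk (m n) y‖ ≤ 1/(2*(n+1)) :=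
    fun n => hgspec n (m n) (le_max_right _ _)
  -- continuity moduli
  have hη : ∀ n : ℕ, ∃ η > (0:ℝ), ∀ z : Y, ‖z - y‖ ≤ η →
      ‖Rk (m n) y - Rk (m n) z‖ ≤ 1/(2*(n+1)) := by
    intro n
    obtain ⟨η', hη', hball⟩ := Metric.continuousAt_iff.mp ((hRkcont (m n)).continuousAt (x := y))
      (1/(2*(n+1))) (hεpos n)
    refine ⟨η'/2, by positivity, fun z hz => ?_⟩
    have : dist z y < η' := by
      rw [dist_eq_norm]; linarith
    have := hball this
    rw [dist_eq_norm] at this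
    rw [← norm_neg, neg_sub]
    exact this.le
  choose η hηpos hηspec using hη
  -- the decreasing sequence of thresholds
  set d : ℕ → ℝ := fun n => min (1/(n+1))
    ((Finset.range (n+1)).inf' (by simp) fun i => η i) with hd
  have hdpos : ∀ n, 0 < d n := by
    intro n
    refine lt_min (by positivity) ?_
    rw [Finset.lt_inf'_iff]
    exact fun i _ => hηpos i
  have hdle : ∀ n, d n ≤ η n := by
    intro n
    exact le_trans (min_le_right _ _)
      (Finset.inf'_le _ (Finset.self_mem_range_succ n))
  have hdanti : ∀ a b : ℕ, a ≤ b → d b ≤ d a := by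
    intro a b hab
    refine le_min ?_ ?_
    · refine le_trans (min_le_left _ _)
        (one_div_le_one_div_of_le (by positivity) (by exact_mod_cast Nat.succ_le_succ hab))
    · rw [Finset.le_inf'_iff]
      intro i hi
      refine le_trans (min_le_right _ _) (Finset.inf'_le _ ?_)
      simp only [Finset.mem_range] at hi ⊢
      omega
  have hex : ∀ δ : ℝ, 0 < δ → ∃ n, d n < δ := by
    intro δ hδ
    obtain ⟨n, hn⟩ := exists_nat_gt (1/δ)
    refine ⟨n, lt_of_le_of_lt (min_le_left _ _) ?_⟩
    rw [div_lt_iff₀ (by positivity)]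
    rw [div_lt_iff₀ hδ] at hn
    nlinarith
  set κ : ℝ → ℕ := fun δ => if h : 0 < δ then m (Nat.find (hex δ h) - 1) else 0 with hκ
  -- key: if δ ≤ d N then N < Nat.find
  have hkey : ∀ (δ : ℝ) (h : 0 < δ) (N : ℕ), δ ≤ d N → N < Nat.find (hex δ h) := by
    intro δ h N hδN
    by_contra hc
    push_neg at hc
    exact absurd (Nat.find_spec (hex δ h)) (not_lt.mpr (hδN.trans (hdanti _ _ hc)))
  refine ⟨κ, ?_, ?_⟩
  · rw [tendsto_atTop]
    intro b
    filter_upwards [Ioo_mem_nhdsGT_of_mem (Set.left_mem_Ico.mpr (hdpos b))] with δ hδ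
    obtain ⟨hδ0, hδb⟩ := hδ
    have hN := hkey δ hδ0 b hδb.le
    simp only [hκ, dif_pos hδ0]
    exact le_trans (by omega) (hmn _)
  · intro ε hε
    obtain ⟨N, hN⟩ := exists_nat_gt (1/ε)
    have hNε : 1/((N:ℝ)+1) ≤ ε := by
      rw [div_le_iff₀ (by positivity)]
      rw [div_lt_iff₀ hε] at hN
      nlinarith
    refine ⟨d N, hdpos N, fun δ hδ0 hδN yδ hyδ => ?_⟩
    set f := Nat.find (hex δ hδ0) with hf
    have hfN : N < f := hkey δ hδ0 N hδN
    set n := f - 1 with hn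
    have hnN : N ≤ n := by omega
    have hnf : n < f := by omega
    have hδn : δ ≤ d n := le_of_not_gt (Nat.find_min (hex δ hδ0) hnf)
    have hκδ : κ δ = m n := by simp [hκ, dif_pos hδ0]; rfl
    rw [hκδ]
    have h1 : ‖R y - Rk (m n) y‖ ≤ 1/(2*(n+1)) := hmclose n
    have h2 : ‖Rk (m n) y - Rk (m n) yδ‖ ≤ 1/(2*(n+1)) :=
      hηspec n yδ (hyδ.trans (hδn.trans (hdle n)))
    calc ‖R y - Rk (m n) yδ‖
        ≤ ‖R y - Rk (m n) y‖ + ‖Rk (m n) y - Rk (m n) yδ‖ := norm_sub_le_norm_sub_add_norm_sub _ _ _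
      _ ≤ 1/(2*(n+1)) + 1/(2*(n+1)) := add_le_add h1 h2
      _ = 1/((n:ℝ)+1) := by field_simp; norm_num
      _ ≤ 1/((N:ℝ)+1) := one_div_le_one_div_of_le (by positivity) (by exact_mod_cast Nat.succ_le_succ hnN)
      _ ≤ ε := hNε
end

section
/- Let T : X → X be nonexpansive with nonempty fixed point set, and suppose that for every starting point x₀ the basic iteration x_{k+1} = T(x_k) converges strongly to some fixed point of T. Then for every x₀ ∈ X, every sequence (t_k) of nonnegative reals with ∑ t_k < ∞, and every bounded sequence (d_k) in X, the perturbed iteration x_{k+1} = T(x_k + t_k d_k) converges strongly to a fixed point of T. -/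
open Filter Topology

/-- Bounded perturbation resilience: if `T` is nonexpansive with nonempty fixed point set
and every unperturbed iteration `x_{k+1} = T x_k` converges strongly to a fixed point,
then every perturbed iteration `x_{k+1} = T (x_k + t_k • d_k)` with summable nonnegative
`(t_k)` and bounded `(d_k)` converges strongly to a fixed point of `T`. -/
theorem stmt_2
    {X : Type*} [NormedAddCommGroup X] [InnerProductSpace ℝ X] [CompleteSpace X]
    (T : X → X) (hT : ∀ x x' : X, ‖T x - T x'‖ ≤ ‖x - x'‖)
    (hfix : ∃ p, T p = p)
    (hconv : ∀ x₀ : X, ∃ p, T p = p ∧ Tendsto (fun k => T^[k] x₀) atTop (𝓝 p)) :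
    ∀ (x₀ : X) (t : ℕ → ℝ) (d : ℕ → X), (∀ k, 0 ≤ t k) → Summable t →
      (∃ M, ∀ k, ‖d k‖ ≤ M) →
      ∀ x : ℕ → X, x 0 = x₀ → (∀ k, x (k + 1) = T (x k + t k • d k)) →
        ∃ p, T p = p ∧ Tendsto x atTop (𝓝 p) := by
  classical
  intro x₀ t d ht hsum hbd x hx0 hrec
  obtain ⟨M, hM⟩ := hbd
  -- error terms
  set e : ℕ → ℝ := fun k => ‖x (k+1) - T (x k)‖ with he_def
  have he0 : ∀ k, 0 ≤ e k := fun k => norm_nonneg _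
  have heb : ∀ k, e k ≤ t k * max M 0 := by
    intro k
    calc e k = ‖T (x k + t k • d k) - T (x k)‖ := by rw [he_def]; simp only [hrec]
      _ ≤ ‖x k + t k • d k - x k‖ := hT _ _
      _ = t k * ‖d k‖ := by
          rw [add_sub_cancel_left, norm_smul, Real.norm_eq_abs, abs_of_nonneg (ht k)]
      _ ≤ t k * max M 0 := mul_le_mul_of_nonneg_left (le_max_of_le_left (hM k)) (ht k)
  have hesum : Summable e := Summable.of_nonneg_of_le he0 heb (hsum.mul_right _)
  -- tail sums
  have hshift : ∀ n, Summable (fun k => e (n + k)) := by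
    intro n
    exact ((summable_nat_add_iff n).mpr hesum).congr (fun k => by rw [add_comm])
  set S : ℕ → ℝ := fun n => ∑' k, e (n + k) with hS_def
  have hS0 : ∀ n, 0 ≤ S n := fun n => tsum_nonneg (fun k => he0 _)
  have hS_tend : Tendsto S atTop (𝓝 0) := by
    have h := tendsto_sum_nat_add e
    refine h.congr (fun n => ?_)
    exact tsum_congr fun k => congrArg e (by omega)
  have hS_succ : ∀ n, S n = e n + S (n+1) := by
    intro n
    calc S n = e (n+0) + ∑' k, e (n + (k+1)) := Summable.tsum_eq_zero_add (hshift n)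
      _ = e n + S (n+1) := by
          rw [add_zero]
          congr 1
          exact tsum_congr fun k => congrArg e (by omega)
  have hS_anti : Antitone S := by
    refine antitone_nat_of_succ_le fun n => ?_
    rw [hS_succ n]
    linarith [he0 n]
  -- key estimate between the perturbed orbit and exact iterates
  have hkey : ∀ n m, ‖x (n + m) - T^[m] (x n)‖ ≤ ∑ k ∈ Finset.range m, e (n + k) := by
    intro n m
    induction m with
    | zero => simp
    | succ m ih =>
      have tri : ‖x (n+(m+1)) - T^[m+1] (x n)‖ ≤
          ‖x (n+(m+1)) - T (x (n+m))‖ + ‖T (x (n+m)) - T^[m+1] (x n)‖ := by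
        simpa [dist_eq_norm] using dist_triangle (x (n+(m+1))) (T (x (n+m))) (T^[m+1] (x n))
      have h2 : ‖x (n+(m+1)) - T (x (n+m))‖ = e (n+m) := by
        rw [show n+(m+1) = (n+m)+1 by omega]
      have h3 : ‖T (x (n+m)) - T^[m+1] (x n)‖ ≤ ‖x (n+m) - T^[m] (x n)‖ := by
        rw [Function.iterate_succ_apply']; exact hT _ _
      calc ‖x (n+(m+1)) - T^[m+1] (x n)‖
          ≤ e (n+m) + ‖x (n+m) - T^[m] (x n)‖ := by rw [← h2]; exact tri.trans (by linarith)
        _ ≤ e (n+m) + ∑ k ∈ Finset.range m, e (n+k) := by linarith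
        _ = ∑ k ∈ Finset.range (m+1), e (n+k) := by
            rw [Finset.sum_range_succ]; ring
  have hkeyS : ∀ n m, ‖x (n + m) - T^[m] (x n)‖ ≤ S n := by
    intro n m
    exact (hkey n m).trans (Summable.sum_le_tsum (Finset.range m) (fun k _ => he0 _) (hshift n))
  -- limits of exact iterates started at x n
  choose p hpfix hptend using fun n => hconv (x n)
  have hpp : ∀ n n', n ≤ n' → ‖p n - p n'‖ ≤ S n + S n' := by
    intro n n' hnn
    have hlim1 : Tendsto (fun m => T^[(n' - n) + m] (x n)) atTop (𝓝 (p n)) := by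
      have h := (hptend n).comp (tendsto_add_atTop_nat (n' - n))
      exact h.congr (fun m => by simp [add_comm])
    have hbound : ∀ m, ‖T^[(n'-n)+m] (x n) - T^[m] (x n')‖ ≤ S n + S n' := by
      intro m
      have h1 : ‖x (n' + m) - T^[(n'-n)+m] (x n)‖ ≤ S n := by
        have h := hkeyS n ((n'-n)+m)
        rwa [show n + ((n'-n)+m) = n' + m by omega] at h
      have h2 : ‖x (n' + m) - T^[m] (x n')‖ ≤ S n' := hkeyS n' m
      rw [norm_sub_rev] at h1
      calc ‖T^[(n'-n)+m] (x n) - T^[m] (x n')‖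
          ≤ ‖T^[(n'-n)+m] (x n) - x (n'+m)‖ + ‖x (n'+m) - T^[m] (x n')‖ := by
            simpa [dist_eq_norm] using
              dist_triangle (T^[(n'-n)+m] (x n)) (x (n'+m)) (T^[m] (x n'))
        _ ≤ S n + S n' := add_le_add h1 h2
    have hlimdiff : Tendsto (fun m => ‖T^[(n'-n)+m] (x n) - T^[m] (x n')‖) atTop
        (𝓝 ‖p n - p n'‖) := (hlim1.sub (hptend n')).norm
    exact le_of_tendsto hlimdiff (Filter.Eventually.of_forall hbound)
  -- the fixed points p n form a Cauchy sequence
  have hcauchy : CauchySeq p := by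
    refine cauchySeq_of_le_tendsto_0 (fun N => 2 * S N) (fun n m N hn hm => ?_) ?_
    · rw [dist_eq_norm]
      rcases le_total n m with h | h
      · calc ‖p n - p m‖ ≤ S n + S m := hpp n m h
          _ ≤ 2 * S N := by linarith [hS_anti hn, hS_anti hm]
      · rw [norm_sub_rev]
        calc ‖p m - p n‖ ≤ S m + S n := hpp m n h
          _ ≤ 2 * S N := by linarith [hS_anti hn, hS_anti hm]
    · simpa using hS_tend.const_mul 2
  obtain ⟨q, hq⟩ := cauchySeq_tendsto_of_complete hcauchy
  have hlip : LipschitzWith 1 T := LipschitzWith.of_dist_le_mul (fun a b => by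
    rw [dist_eq_norm, dist_eq_norm]; simpa using hT a b)
  have hTq : T q = q := by
    have h1 : Tendsto (fun n => T (p n)) atTop (𝓝 (T q)) :=
      (hlip.continuous.tendsto q).comp hq
    have h2 : (fun n => T (p n)) = p := funext hpfix
    rw [h2] at h1
    exact tendsto_nhds_unique h1 hq
  refine ⟨q, hTq, ?_⟩
  rw [Metric.tendsto_atTop]
  intro ε hε
  have hε3 : (0:ℝ) < ε/3 := by linarith
  obtain ⟨n₁, hn₁⟩ := (Metric.tendsto_atTop.mp hS_tend) (ε/3) hε3
  obtain ⟨n₂, hn₂⟩ := (Metric.tendsto_atTop.mp hq) (ε/3) hε3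
  set n := max n₁ n₂ with hn_def
  have hSn : S n < ε/3 := by
    have := hn₁ n (le_max_left _ _)
    rwa [Real.dist_eq, sub_zero, abs_of_nonneg (hS0 n)] at this
  have hpnq : dist (p n) q < ε/3 := hn₂ n (le_max_right _ _)
  obtain ⟨N', hN'⟩ := (Metric.tendsto_atTop.mp (hptend n)) (ε/3) hε3
  refine ⟨n + N', fun m hm => ?_⟩
  have hmn : n ≤ m := le_trans (Nat.le_add_right n N') hm
  set j := m - n with hj_def
  have hjm : m = n + j := by omega
  have hjN : N' ≤ j := by omega
  have h1 : ‖x m - T^[j] (x n)‖ ≤ S n := by rw [hjm]; exact hkeyS n j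
  have h2 : dist (T^[j] (x n)) (p n) < ε/3 := hN' j hjN
  calc dist (x m) q ≤ dist (x m) (T^[j] (x n)) + dist (T^[j] (x n)) (p n) + dist (p n) q :=
        dist_triangle4 _ _ _ _
    _ < ε/3 + ε/3 + ε/3 := by
        rw [dist_eq_norm]
        have := h1.trans_lt hSn
        linarith
    _ = ε := by ring
end

section
/- Let A : X → Y be bounded linear, 0 < λ < 1/‖A‖², and y ∈ A(X). Suppose the unperturbed Landweber iteration x_{k+1} = x_k − λA*(Ax_k − y) converges strongly to a solution of Ax = y for every starting point. Then for any summable nonnegative sequence (t_k) and any maps Φ_k : X → X with uniformly bounded range, the superiorized Landweber iteration x_{k+1/2} = x_k + t_k Φ_k(x_k), x_{k+1} = x_{k+1/2} − λA*(A x_{k+1/2} − y), with any initial point x₀, converges strongly to some x̂ with A x̂ = y. -/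
open Filter Topology

/-- Perturbation resilience of the Landweber iteration: if the unperturbed Landweber
iteration converges strongly to a solution of `A x = y` for every starting point, then the
superiorized Landweber iteration (with summable nonnegative steps `t_k` and uniformly
bounded perturbations `Φ_k`) converges strongly to a solution of `A x = y`. -/
theorem stmt_6
    {X Y : Type*} [NormedAddCommGroup X] [InnerProductSpace ℝ X] [CompleteSpace X]
    [NormedAddCommGroup Y] [InnerProductSpace ℝ Y] [CompleteSpace Y]
    (A : X →L[ℝ] Y) (lam : ℝ) (hlam₀ : 0 < lam) (hlam₁ : lam < 1 / ‖A‖ ^ 2)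
    (y : Y) (hy : y ∈ Set.range A)
    (hconv : ∀ x₀ : X, ∀ x : ℕ → X, x 0 = x₀ →
      (∀ k, x (k + 1) = x k - lam • (ContinuousLinearMap.adjoint A) (A (x k) - y)) →
      ∃ xhat, A xhat = y ∧ Tendsto x atTop (𝓝 xhat))
    (t : ℕ → ℝ) (ht : ∀ k, 0 ≤ t k) (htsum : Summable t)
    (Φ : ℕ → X → X) (M : ℝ) (hΦ : ∀ k x, ‖Φ k x‖ ≤ M) :
    ∀ (x₀ : X) (x : ℕ → X), x 0 = x₀ →
      (∀ k, x (k + 1) =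
        (x k + t k • Φ k (x k)) -
          lam • (ContinuousLinearMap.adjoint A) (A (x k + t k • Φ k (x k)) - y)) →
      ∃ xhat, A xhat = y ∧ Tendsto x atTop (𝓝 xhat) := by
  intro x₀ x hx0 hrec
  set T : X → X := fun u => u - lam • (ContinuousLinearMap.adjoint A) (A u - y) with hTdef
  have hM : 0 ≤ M := le_trans (norm_nonneg _) (hΦ 0 x₀)
  have hAsq : 0 < ‖A‖ ^ 2 := one_div_pos.mp (hlam₀.trans hlam₁)
  have hlA : lam * ‖A‖ ^ 2 < 1 := (lt_div_iff₀ hAsq).mp hlam₁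
  -- key contraction estimate
  have key : ∀ w : X, ‖w - lam • (ContinuousLinearMap.adjoint A) (A w)‖ ≤ ‖w‖ := by
    intro w
    have hinner : inner ℝ w (lam • (ContinuousLinearMap.adjoint A) (A w)) = lam * ‖A w‖ ^ 2 := by
      rw [real_inner_smul_right, ContinuousLinearMap.adjoint_inner_right,
        real_inner_self_eq_norm_sq]
    have hnorm : ‖lam • (ContinuousLinearMap.adjoint A) (A w)‖ ≤ lam * (‖A‖ * ‖A w‖) := by
      rw [norm_smul, Real.norm_eq_abs, abs_of_pos hlam₀]
      have h1 : ‖(ContinuousLinearMap.adjoint A) (A w)‖ ≤ ‖ContinuousLinearMap.adjoint A‖ * ‖A w‖ :=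
        (ContinuousLinearMap.adjoint A).le_opNorm (A w)
      have h2 : ‖ContinuousLinearMap.adjoint A‖ = ‖A‖ :=
        ContinuousLinearMap.adjoint.norm_map A
      rw [h2] at h1
      exact mul_le_mul_of_nonneg_left h1 (le_of_lt hlam₀)
    have hsq : ‖w - lam • (ContinuousLinearMap.adjoint A) (A w)‖ ^ 2 ≤ ‖w‖ ^ 2 := by
      rw [@norm_sub_sq_real, hinner]
      have h3 : ‖lam • (ContinuousLinearMap.adjoint A) (A w)‖ ^ 2 ≤ (lam * (‖A‖ * ‖A w‖)) ^ 2 := by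
        apply pow_le_pow_left₀ (norm_nonneg _) hnorm
      have h5 : lam * ‖A‖ ^ 2 * (lam * ‖A w‖ ^ 2) ≤ 1 * (lam * ‖A w‖ ^ 2) :=
        mul_le_mul_of_nonneg_right hlA.le (mul_nonneg hlam₀.le (sq_nonneg _))
      nlinarith [h3, h5, mul_nonneg hlam₀.le (sq_nonneg (‖A w‖))]
    nlinarith [norm_nonneg (w - lam • (ContinuousLinearMap.adjoint A) (A w)), norm_nonneg w]
  -- T is nonexpansive
  have hT : ∀ u v : X, ‖T u - T v‖ ≤ ‖u - v‖ := by
    intro u v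
    have heq : T u - T v = (u - v) - lam • (ContinuousLinearMap.adjoint A) (A (u - v)) := by
      simp only [hTdef, map_sub, smul_sub]
      abel
    rw [heq]
    exact key (u - v)
  -- iterates are nonexpansive
  have hTm : ∀ m : ℕ, ∀ u v : X, ‖T^[m] u - T^[m] v‖ ≤ ‖u - v‖ := by
    intro m
    induction m with
    | zero => intro u v; simp
    | succ m ih =>
      intro u v
      rw [Function.iterate_succ_apply', Function.iterate_succ_apply']
      exact le_trans (hT _ _) (ih u v)
  -- unperturbed orbits converge
  have hz : ∀ n : ℕ, ∃ L, A L = y ∧ Tendsto (fun m => T^[m] (x n)) atTop (𝓝 L) := by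
    intro n
    exact hconv (x n) (fun m => T^[m] (x n)) (by simp)
      (fun k => by simp only [Function.iterate_succ_apply']; rfl)
  choose L hLy hL using hz
  -- one-step perturbation bound
  have hstep : ∀ n, ‖x (n + 1) - T (x n)‖ ≤ t n * M := by
    intro n
    have e1 : x (n + 1) = T (x n + t n • Φ n (x n)) := hrec n
    rw [e1]
    calc ‖T (x n + t n • Φ n (x n)) - T (x n)‖ ≤ ‖(x n + t n • Φ n (x n)) - x n‖ := hT _ _
      _ = ‖t n • Φ n (x n)‖ := by congr 1; abel
      _ = t n * ‖Φ n (x n)‖ := by rw [norm_smul, Real.norm_eq_abs, abs_of_nonneg (ht n)]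
      _ ≤ t n * M := mul_le_mul_of_nonneg_left (hΦ n (x n)) (ht n)
  -- limits form a Cauchy sequence
  have hLdiff : ∀ n, ‖L (n + 1) - L n‖ ≤ t n * M := by
    intro n
    have h1 : Tendsto (fun m => T^[m] (x (n + 1)) - T^[m + 1] (x n)) atTop
        (𝓝 (L (n + 1) - L n)) :=
      (hL (n + 1)).sub ((hL n).comp (tendsto_add_atTop_nat 1))
    have h2 : Tendsto (fun m => ‖T^[m] (x (n + 1)) - T^[m + 1] (x n)‖) atTop
        (𝓝 ‖L (n + 1) - L n‖) := h1.norm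
    refine le_of_tendsto h2 (Eventually.of_forall fun m => ?_)
    have : T^[m + 1] (x n) = T^[m] (T (x n)) := Function.iterate_succ_apply T m (x n)
    rw [this]
    exact le_trans (hTm m _ _) (hstep n)
  have hLc : CauchySeq L := by
    apply cauchySeq_of_dist_le_of_summable (fun n => t n * M)
      (fun n => by rw [dist_eq_norm, norm_sub_rev]; exact hLdiff n)
      (htsum.mul_right M)
  obtain ⟨Linf, hLinf⟩ := cauchySeq_tendsto_of_complete hLc
  have hAy : A Linf = y := by
    have h1 : Tendsto (fun n => A (L n)) atTop (𝓝 (A Linf)) :=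
      (A.continuous.tendsto Linf).comp hLinf
    have h2 : (fun n => A (L n)) = fun _ => y := funext fun n => hLy n
    rw [h2] at h1
    exact (tendsto_nhds_unique h1 tendsto_const_nhds).symm ▸ rfl
  -- drift bound
  have hdrift : ∀ n m : ℕ, ‖x (n + m) - T^[m] (x n)‖ ≤ M * ∑ k ∈ Finset.range m, t (n + k) := by
    intro n m
    induction m with
    | zero => simp
    | succ m ih =>
      have e1 : x (n + (m + 1)) = T (x (n + m) + t (n + m) • Φ (n + m) (x (n + m))) :=
        hrec (n + m)
      calc ‖x (n + (m + 1)) - T^[m + 1] (x n)‖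
          = ‖T (x (n + m) + t (n + m) • Φ (n + m) (x (n + m))) - T (T^[m] (x n))‖ := by
            rw [e1, Function.iterate_succ_apply']
        _ ≤ ‖(x (n + m) + t (n + m) • Φ (n + m) (x (n + m))) - T^[m] (x n)‖ := hT _ _
        _ = ‖(x (n + m) - T^[m] (x n)) + t (n + m) • Φ (n + m) (x (n + m))‖ := by congr 1; abel
        _ ≤ ‖x (n + m) - T^[m] (x n)‖ + ‖t (n + m) • Φ (n + m) (x (n + m))‖ := norm_add_le _ _
        _ ≤ M * ∑ k ∈ Finset.range m, t (n + k) + t (n + m) * M := by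
            refine add_le_add ih ?_
            rw [norm_smul, Real.norm_eq_abs, abs_of_nonneg (ht _)]
            exact mul_le_mul_of_nonneg_left (hΦ _ _) (ht _)
        _ = M * ∑ k ∈ Finset.range (m + 1), t (n + k) := by
            rw [Finset.sum_range_succ]; ring
  -- tails
  have htail : ∀ n m : ℕ, ∑ k ∈ Finset.range m, t (n + k) ≤ ∑' k, t (k + n) := by
    intro n m
    have e : ∑ k ∈ Finset.range m, t (n + k) = ∑ k ∈ Finset.range m, t (k + n) :=
      Finset.sum_congr rfl (fun k _ => by rw [add_comm])
    rw [e]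
    exact Summable.sum_le_tsum (Finset.range m) (fun i _ => ht _)
      ((summable_nat_add_iff n).mpr htsum)
  have hr0 : Tendsto (fun n => M * ∑' k, t (k + n)) atTop (𝓝 0) := by
    have := (tendsto_sum_nat_add t).const_mul M
    simpa using this
  refine ⟨Linf, hAy, ?_⟩
  rw [Metric.tendsto_atTop]
  intro ε hε
  obtain ⟨n₁, hn₁⟩ := (Metric.tendsto_atTop.mp hr0) (ε / 4) (by linarith)
  obtain ⟨n₂, hn₂⟩ := (Metric.tendsto_atTop.mp hLinf) (ε / 4) (by linarith)
  set n := max n₁ n₂ with hn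
  obtain ⟨m₀, hm₀⟩ := (Metric.tendsto_atTop.mp (hL n)) (ε / 4) (by linarith)
  refine ⟨n + m₀, fun j hj => ?_⟩
  obtain ⟨m, rfl⟩ : ∃ m, j = n + m := ⟨j - n, by omega⟩
  have hm : m ≥ m₀ := by omega
  have d1 : dist (x (n + m)) (T^[m] (x n)) ≤ M * ∑' k, t (k + n) := by
    rw [dist_eq_norm]
    exact le_trans (hdrift n m) (mul_le_mul_of_nonneg_left (htail n m) hM)
  have d1' : M * ∑' k, t (k + n) < ε / 4 := by
    have := hn₁ n (le_max_left _ _)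
    rw [Real.dist_eq, sub_zero] at this
    exact lt_of_le_of_lt (le_abs_self _) this
  have d2 : dist (T^[m] (x n)) (L n) < ε / 4 := hm₀ m hm
  have d3 : dist (L n) Linf < ε / 4 := hn₂ n (le_max_right _ _)
  calc dist (x (n + m)) Linf
      ≤ dist (x (n + m)) (T^[m] (x n)) + dist (T^[m] (x n)) (L n) + dist (L n) Linf :=
        dist_triangle4 _ _ _ _
    _ < ε / 4 + ε / 4 + ε / 4 := by
        apply add_lt_add (add_lt_add_of_le_of_lt (le_trans d1 (le_of_lt d1')) d2) d3
    _ < ε := by linarith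
end

section
/- Let A : X → Y be bounded linear with non-closed range, 0 < λ < 1/‖A‖², (t_k) summable nonnegative, Φ_k : X → X continuous with uniformly bounded range. Define B_k : Y → X as the k-th superiorized Landweber iterate with starting value 0, and suppose B_k(y) → B(y) for each y ∈ A(X), where A(B(y)) = y. Then for every y ∈ A(X) there is a parameter choice κ : (0,∞) → ℕ such that for all families y^δ with ‖y − y^δ‖ ≤ δ one has ‖B(y) − B_{κ(δ)}(y^δ)‖ → 0 as δ → 0; i.e., ((B_k), κ) is a regularization method for A x = y adapted to the right inverse B. -/
open Filter Topology

private noncomputable def dseq (r : ℕ → ℝ) : ℕ → ℝ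
  | 0 => min (r 0 / 2) 1
  | k + 1 => min (dseq r k / 2) (r (k + 1) / 2)

private lemma dseq_pos {r : ℕ → ℝ} (hr : ∀ k, 0 < r k) : ∀ k, 0 < dseq r k := by
  intro k
  induction k with
  | zero => exact lt_min (by linarith [hr 0]) one_pos
  | succ k ih => exact lt_min (by linarith) (by linarith [hr (k + 1)])

private lemma dseq_lt_r {r : ℕ → ℝ} (hr : ∀ k, 0 < r k) : ∀ k, dseq r k < r k := by
  intro k
  cases k with
  | zero => exact lt_of_le_of_lt (min_le_left _ _) (by linarith [hr 0])
  | succ k => exact lt_of_le_of_lt (min_le_right _ _) (by linarith [hr (k + 1)])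

private lemma dseq_anti {r : ℕ → ℝ} (hr : ∀ k, 0 < r k) : Antitone (dseq r) := by
  apply antitone_nat_of_succ_le
  intro k
  have h := dseq_pos hr k
  calc dseq r (k + 1) ≤ dseq r k / 2 := min_le_left _ _
    _ ≤ dseq r k := by linarith

private lemma dseq_le_pow {r : ℕ → ℝ} (hr : ∀ k, 0 < r k) :
    ∀ k, dseq r k ≤ (1 / 2) ^ k := by
  intro k
  induction k with
  | zero =>
    simp only [dseq, pow_zero]
    exact min_le_right _ _
  | succ k ih =>
    calc dseq r (k + 1) ≤ dseq r k / 2 := min_le_left _ _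
      _ ≤ (1 / 2) ^ k / 2 := by linarith
      _ = (1 / 2) ^ (k + 1) := by ring

/-- The truncated superiorized Landweber iteration, together with a suitable parameter
choice rule `κ`, is a regularization method for `A x = y` adapted to the right inverse `B`
obtained as the limit of the exact-data iteration. -/
theorem stmt_8
    {X Y : Type*} [NormedAddCommGroup X] [InnerProductSpace ℝ X] [CompleteSpace X]
    [NormedAddCommGroup Y] [InnerProductSpace ℝ Y] [CompleteSpace Y]
    (A : X →L[ℝ] Y) (hA : ¬ IsClosed (Set.range A))
    (lam : ℝ) (hlam₀ : 0 < lam) (hlam₁ : lam < 1 / ‖A‖ ^ 2)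
    (t : ℕ → ℝ) (ht : ∀ k, 0 ≤ t k) (htsum : Summable t)
    (Φ : ℕ → X → X) (hΦcont : ∀ k, Continuous (Φ k))
    (M : ℝ) (hΦbd : ∀ k x, ‖Φ k x‖ ≤ M)
    (B : ℕ → Y → X) (hB0 : ∀ y, B 0 y = 0)
    (hBrec : ∀ k y, B (k + 1) y =
      (B k y + t k • Φ k (B k y)) -
        lam • (ContinuousLinearMap.adjoint A) (A (B k y + t k • Φ k (B k y)) - y))
    (Binf : Y → X)
    (hBlim : ∀ y ∈ Set.range A, Tendsto (fun k => B k y) atTop (𝓝 (Binf y)))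
    (hBright : ∀ y ∈ Set.range A, A (Binf y) = y) :
    ∀ y ∈ Set.range A, ∃ κ : ℝ → ℕ,
      Tendsto κ (𝓝[>] (0 : ℝ)) atTop ∧
      ∀ ε > (0 : ℝ), ∃ δ₀ > (0 : ℝ), ∀ δ : ℝ, 0 < δ → δ ≤ δ₀ →
        ∀ yδ : Y, ‖yδ - y‖ ≤ δ → ‖Binf y - B (κ δ) yδ‖ ≤ ε := by
  intro y hy
  classical
  -- each B k is continuous in the data
  have hcont : ∀ k, Continuous (B k) := by
    intro k
    induction k with
    | zero =>
      have h : B 0 = fun _ => 0 := funext hB0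
      rw [h]; exact continuous_const
    | succ k ih =>
      have h : B (k + 1) = fun y => (B k y + t k • Φ k (B k y)) -
          lam • (ContinuousLinearMap.adjoint A) (A (B k y + t k • Φ k (B k y)) - y) :=
        funext (hBrec k)
      rw [h]
      have h1 : Continuous fun y => B k y + t k • Φ k (B k y) :=
        ih.add (((hΦcont k).comp ih).const_smul (t k))
      exact h1.sub (((ContinuousLinearMap.adjoint A).continuous.comp
        ((A.continuous.comp h1).sub continuous_id)).const_smul lam)
  -- continuity radii at y
  have hrex : ∀ k : ℕ, ∃ r > 0, ∀ y', dist y' y < r →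
      dist (B k y') (B k y) < 1 / (k + 1) := fun k =>
    Metric.continuous_iff.mp (hcont k) y (1 / (k + 1)) (by positivity)
  choose r hrpos hr using hrex
  set d := dseq r with hd
  have dpos := dseq_pos hrpos
  have hex : ∀ δ : ℝ, 0 < δ → ∃ k, d k < δ := by
    intro δ hδ
    obtain ⟨k, hk⟩ := exists_pow_lt_of_lt_one hδ (by norm_num : (1 : ℝ) / 2 < 1)
    exact ⟨k, lt_of_le_of_lt (dseq_le_pow hrpos k) hk⟩
  set κ : ℝ → ℕ := fun δ => if h : ∃ k, d k < δ then Nat.find h - 1 else 0 with hκ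
  have key : ∀ δ : ℝ, 0 < δ → ∀ n, δ ≤ d n → n ≤ κ δ ∧ δ ≤ d (κ δ) := by
    intro δ hδ n hn
    have h := hex δ hδ
    have hfind : n + 1 ≤ Nat.find h := by
      rw [Nat.succ_le_iff, Nat.lt_find_iff]
      intro j hj
      exact not_lt.mpr (le_trans hn (dseq_anti hrpos hj))
    have hκδ : κ δ = Nat.find h - 1 := by simp [hκ, h]
    constructor
    · rw [hκδ]; omega
    · rw [hκδ]
      exact not_lt.mp (Nat.find_min h (by omega))
  refine ⟨κ, ?_, ?_⟩
  · -- κ tends to infinity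
    rw [tendsto_atTop]
    intro n
    filter_upwards [Ioc_mem_nhdsGT_of_mem (Set.left_mem_Ico.mpr (dpos n))] with δ hδ
    exact (key δ hδ.1 n hδ.2).1
  · intro ε hε
    obtain ⟨K1, hK1⟩ := Metric.tendsto_atTop.mp (hBlim y hy) (ε / 2) (by linarith)
    obtain ⟨N, hN⟩ := exists_nat_gt (2 / ε)
    refine ⟨d (max K1 N), dpos _, ?_⟩
    intro δ hδ0 hδK yδ hyδ
    obtain ⟨hκge, hκd⟩ := key δ hδ0 (max K1 N) hδK
    have h1 : dist (B (κ δ) yδ) (B (κ δ) y) < 1 / (κ δ + 1) := by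
      apply hr
      calc dist yδ y = ‖yδ - y‖ := dist_eq_norm _ _
        _ ≤ δ := hyδ
        _ ≤ d (κ δ) := hκd
        _ < r (κ δ) := dseq_lt_r hrpos _
    have h2 : dist (B (κ δ) y) (Binf y) < ε / 2 :=
      hK1 (κ δ) (le_trans (le_max_left _ _) hκge)
    have hc : (N : ℝ) ≤ (κ δ : ℝ) + 1 := by
      exact_mod_cast Nat.le_succ_of_le (le_trans (le_max_right _ _) hκge)
    have h2N : 2 < (N : ℝ) * ε := (div_lt_iff₀ hε).mp hN
    have h3 : 1 / ((κ δ : ℝ) + 1) ≤ ε / 2 := by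
      rw [div_le_div_iff₀ (by positivity) two_pos]
      nlinarith [mul_le_mul_of_nonneg_right hc hε.le]
    have htr : dist (Binf y) (B (κ δ) yδ) ≤
        dist (Binf y) (B (κ δ) y) + dist (B (κ δ) y) (B (κ δ) yδ) := dist_triangle _ _ _
    rw [dist_comm (Binf y) (B (κ δ) y), dist_comm (B (κ δ) y) (B (κ δ) yδ)] at htr
    rw [← dist_eq_norm]
    linarith
end

section
/- Let T : X → X be nonexpansive and suppose every unperturbed iteration x_{k+1} = T(x_k) converges strongly to an element of Fix(T) ≠ ∅. If (z_k) is any sequence in X with ∑_{k} ‖z_{k+1} − T(z_k)‖ < ∞, then (z_k) converges strongly to a fixed point of T. -/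
open Filter Topology

/-- Inexact-orbit convergence: if `T` is nonexpansive with `Fix T ≠ ∅` and every
unperturbed iteration `x_{k+1} = T x_k` converges strongly to a fixed point, then any
sequence `(z_k)` with `∑ ‖z_{k+1} − T z_k‖ < ∞` converges strongly to a fixed point. -/
theorem stmt_9
    {X : Type*} [NormedAddCommGroup X] [InnerProductSpace ℝ X] [CompleteSpace X]
    (T : X → X) (hT : ∀ x x' : X, ‖T x - T x'‖ ≤ ‖x - x'‖)
    (hfix : ∃ p, T p = p)
    (hconv : ∀ x₀ : X, ∃ p, T p = p ∧ Tendsto (fun k => T^[k] x₀) atTop (𝓝 p))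
    (z : ℕ → X) (hz : Summable (fun k => ‖z (k + 1) - T (z k)‖)) :
    ∃ p, T p = p ∧ Tendsto z atTop (𝓝 p) := by
  classical
  set e : ℕ → ℝ := fun k => ‖z (k + 1) - T (z k)‖ with he
  have he0 : ∀ k, 0 ≤ e k := fun k => norm_nonneg _
  have hsum : ∀ n, Summable (fun k => e (k + n)) := fun n => (summable_nat_add_iff n).mpr hz
  set t : ℕ → ℝ := fun n => ∑' k, e (k + n) with ht
  have ht0 : ∀ n, 0 ≤ t n := fun n => tsum_nonneg fun k => he0 _
  have htt : Tendsto t atTop (𝓝 0) := tendsto_sum_nat_add e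
  -- bound of inexact orbit against exact orbit
  have hbound : ∀ n m, ‖z (n + m) - T^[m] (z n)‖ ≤ ∑ k ∈ Finset.range m, e (k + n) := by
    intro n m
    induction m with
    | zero => simp
    | succ m ih =>
      rw [Finset.sum_range_succ, Function.iterate_succ_apply']
      have h1 : ‖z (n + (m + 1)) - T (T^[m] (z n))‖ ≤
          ‖z (n + m + 1) - T (z (n + m))‖ + ‖T (z (n + m)) - T (T^[m] (z n))‖ := by
        have := dist_triangle (z (n + m + 1)) (T (z (n + m))) (T (T^[m] (z n)))
        rw [← add_assoc]; simpa [dist_eq_norm] using this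
      have h2 : ‖T (z (n + m)) - T (T^[m] (z n))‖ ≤ ‖z (n + m) - T^[m] (z n)‖ := hT _ _
      have h3 : e (m + n) = ‖z (n + m + 1) - T (z (n + m))‖ := by
        simp [he, add_comm m n]
      have := h1.trans (add_le_add le_rfl (h2.trans ih))
      rw [h3]
      linarith
  have hle : ∀ n m, ‖z (n + m) - T^[m] (z n)‖ ≤ t n := by
    intro n m
    refine (hbound n m).trans ?_
    exact (hsum n).sum_le_tsum (Finset.range m) (fun k _ => he0 _)
  -- limits of exact orbits
  choose p hpfix hptend using fun n => hconv (z n)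
  have key : ∀ n, ∀ ε > (0 : ℝ), ∀ᶠ M in atTop, ‖z M - p n‖ ≤ t n + ε := by
    intro n ε hε
    obtain ⟨m₀, hm₀⟩ := (Metric.tendsto_atTop.mp (hptend n)) ε hε
    refine eventually_atTop.2 ⟨n + m₀, fun M hM => ?_⟩
    have hMn : M = n + (M - n) := by omega
    have h1 : ‖z M - T^[M - n] (z n)‖ ≤ t n := by
      have := hle n (M - n)
      rwa [← hMn] at this
    have h2 : ‖T^[M - n] (z n) - p n‖ ≤ ε := by
      have := hm₀ (M - n) (by omega)
      rw [dist_eq_norm] at this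
      linarith
    calc ‖z M - p n‖ ≤ ‖z M - T^[M - n] (z n)‖ + ‖T^[M - n] (z n) - p n‖ := by
          have := dist_triangle (z M) (T^[M - n] (z n)) (p n)
          simpa [dist_eq_norm] using this
      _ ≤ t n + ε := add_le_add h1 h2
  have hpp : ∀ a b, dist (p a) (p b) ≤ t a + t b := by
    intro a b
    refine le_of_forall_pos_le_add fun ε hε => ?_
    obtain ⟨M, hMa, hMb⟩ := ((key a (ε / 2) (by positivity)).and
      (key b (ε / 2) (by positivity))).exists
    have h1 : dist (p a) (z M) ≤ t a + ε / 2 := by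
      rw [dist_eq_norm, norm_sub_rev]; exact hMa
    have h2 : dist (z M) (p b) ≤ t b + ε / 2 := by
      rw [dist_eq_norm]; exact hMb
    have := dist_triangle (p a) (z M) (p b)
    linarith
  have hanti : Antitone t := by
    refine antitone_nat_of_succ_le fun n => ?_
    have h := (hsum n).tsum_eq_zero_add
    have h2 : (∑' k, e (k + 1 + n)) = t (n + 1) := by
      refine tsum_congr fun k => ?_
      congr 1
      omega
    have h3 : t n = e (0 + n) + ∑' k, e (k + 1 + n) := h
    rw [h2] at h3
    have := he0 (0 + n)
    linarith
  have hcauchy : CauchySeq p := by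
    refine cauchySeq_of_le_tendsto_0 (fun N => 2 * t N) (fun n m N hn hm => ?_) ?_
    · have := hpp n m
      have h1 := hanti hn
      have h2 := hanti hm
      show dist (p n) (p m) ≤ 2 * t N
      linarith
    · simpa using htt.const_mul 2
  obtain ⟨q, hq⟩ := cauchySeq_tendsto_of_complete hcauchy
  have hc : Continuous T := by
    have : LipschitzWith 1 T := LipschitzWith.of_dist_le_mul fun x y => by
      simpa [dist_eq_norm] using hT x y
    exact this.continuous
  have hqfix : T q = q := by
    have h1 : Tendsto (T ∘ p) atTop (𝓝 (T q)) := (hc.tendsto q).comp hq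
    have h2 : T ∘ p = p := funext fun n => hpfix n
    rw [h2] at h1
    exact tendsto_nhds_unique h1 hq
  refine ⟨q, hqfix, ?_⟩
  rw [Metric.tendsto_atTop]
  intro ε hε
  have h1 : ∀ᶠ n in atTop, t n < ε / 3 := htt.eventually (gt_mem_nhds (by positivity))
  have h2 : ∀ᶠ n in atTop, dist (p n) q < ε / 3 :=
    hq.eventually (Metric.ball_mem_nhds q (by positivity))
  obtain ⟨n, hn1, hn2⟩ := (h1.and h2).exists
  obtain ⟨N, hN⟩ := eventually_atTop.mp (key n (ε / 3) (by positivity))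
  refine ⟨N, fun M hM => ?_⟩
  have h3 : ‖z M - p n‖ ≤ t n + ε / 3 := hN M hM
  have h4 : dist (z M) (p n) ≤ t n + ε / 3 := by rw [dist_eq_norm]; exact h3
  have := dist_triangle (z M) (p n) q
  linarith
end
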